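/- arXiv:math/0701163 — 2 statements merged into one kernel-verified Lean document; each statement's English description precedes it below -/
import Mathlib

section
/- Let V and F be finite-dimensional real vector spaces, J : V* → V a skew linear map, G : F → V a linear map with dual map G* : V* → F*, and Δ ⊆ F × F* an isotropic subspace with respect to the pairing metric on F × F*. Then D = {(Jα + G f, α) : α ∈ V*, f ∈ F, (f, G*α) ∈ Δ} is an isotropic subspace of V × V* with respect to the pairing metric on V × V*. -/
open Module LinearMap

/-- The pairing metric `g((x,α),(y,β)) = (1/2)(α(y) + β(x))` on `W × W*`. -/
noncomputable def bigG (W : Type*) [AddCommGroup W] [Module ℝ W] :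
    LinearMap.BilinForm ℝ (W × Module.Dual ℝ W) :=
  LinearMap.mk₂ ℝ (fun p q => (1 / 2 : ℝ) * (p.2 q.1 + q.2 p.1))
    (fun p p' q => by simp; ring)
    (fun c p q => by simp; ring)
    (fun p q q' => by simp; ring)
    (fun c p q => by simp; ring)

/-- If `J` is skew and `Δ ⊆ F × F*` is isotropic, then
`D = {(Jα + Gf, α) : (f, G*α) ∈ Δ}` is an isotropic subset of `V × V*`. -/
theorem stmt17 (V F : Type*) [AddCommGroup V] [Module ℝ V] [FiniteDimensional ℝ V]
    [AddCommGroup F] [Module ℝ F] [FiniteDimensional ℝ F]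
    (J : Dual ℝ V →ₗ[ℝ] V)
    (hJ : ∀ α β : Dual ℝ V, β (J α) = -α (J β))
    (G : F →ₗ[ℝ] V)
    (Δ : Submodule ℝ (F × Dual ℝ F))
    (hΔ : ∀ p ∈ Δ, ∀ q ∈ Δ, bigG F p q = 0)
    (D : Set (V × Dual ℝ V))
    (hD : D = {p : V × Dual ℝ V |
      ∃ (α : Dual ℝ V) (f : F), (f, G.dualMap α) ∈ Δ ∧ p = (J α + G f, α)}) :
    ∀ p ∈ D, ∀ q ∈ D, bigG V p q = 0 := by
  intro p hp q hq
  rw [hD] at hp hq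
  obtain ⟨α, f, hf, rfl⟩ := hp
  obtain ⟨β, g, hg, rfl⟩ := hq
  have key := hΔ _ hf _ hg
  simp [bigG] at key ⊢
  have hskew := hJ α β
  linarith
end

section
/- Let V and F be finite-dimensional real vector spaces, J : V* → V a skew linear map, G : F → V a linear map with dual map G* : V* → F*, and Δ ⊆ F × F* a maximal isotropic subspace (Δ^⊥ = Δ with respect to the pairing metric on F × F*). Then D = {(Jα + G f, α) : α ∈ V*, f ∈ F, (f, G*α) ∈ Δ} satisfies dim D = dim V; consequently D is a maximal isotropic subspace of V × V*, i.e. D^⊥ = D (an almost Dirac structure). -/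
/-!
`D` is the image under `φ(α, f) = (Jα + Gf, α)` of `K = ψ⁻¹(Δ)`, where `ψ(α, f) = (f, G*α)`.
Skewness of `J` makes `φ` carry the metric on `V × V*` to the pull-back along `ψ` of the metric on
`F × F*`, so `D` is isotropic because `Δ` is, and it remains to show `dim D = dim V`.
With `E = ker G × 0 ⊆ F × F*`, the range of `ψ` is `E^⊥`, so `ψ(K) = Δ ∩ E^⊥ = (Δ + E)^⊥`, which
has dimension `dim F - dim E + dim (Δ ∩ E)` since `dim Δ = dim F`; moreover `ψ` maps `K ∩ ker φ`
isomorphically onto `Δ ∩ E`. Rank–nullity for `φ` and `ψ` on `K` then gives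
`dim D = dim F - dim ker G + dim ker G* = rank G + dim ker G* = dim V`.
-/

open Module LinearMap

/-- The `g`-orthogonal complement of a subspace of `W × W*`. -/
noncomputable def gOrth {W : Type*} [AddCommGroup W] [Module ℝ W]
    (A : Submodule ℝ (W × Module.Dual ℝ W)) : Submodule ℝ (W × Module.Dual ℝ W) :=
  LinearMap.BilinForm.orthogonal (bigG W) A

/-- The linear map `(α, f) ↦ (Jα + Gf, α)` from `V* × F` to `V × V*`. -/
noncomputable def phiMap {V F : Type*} [AddCommGroup V] [Module ℝ V]
    [AddCommGroup F] [Module ℝ F] (J : Module.Dual ℝ V →ₗ[ℝ] V) (G : F →ₗ[ℝ] V) :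
    (Module.Dual ℝ V × F) →ₗ[ℝ] V × Module.Dual ℝ V :=
  ((J.comp (LinearMap.fst ℝ (Module.Dual ℝ V) F)) +
    (G.comp (LinearMap.snd ℝ (Module.Dual ℝ V) F))).prod
    (LinearMap.fst ℝ (Module.Dual ℝ V) F)

/-- The linear map `(α, f) ↦ (f, G*α)` from `V* × F` to `F × F*`. -/
noncomputable def psiMap {V F : Type*} [AddCommGroup V] [Module ℝ V]
    [AddCommGroup F] [Module ℝ F] (G : F →ₗ[ℝ] V) :
    (Module.Dual ℝ V × F) →ₗ[ℝ] F × Module.Dual ℝ F :=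
  (LinearMap.snd ℝ (Module.Dual ℝ V) F).prod
    (G.dualMap.comp (LinearMap.fst ℝ (Module.Dual ℝ V) F))

lemma Submodule.finrank_map_add_finrank_ker_inf {K M N : Type*} [DivisionRing K]
    [AddCommGroup M] [Module K M] [FiniteDimensional K M] [AddCommGroup N] [Module K N]
    (f : M →ₗ[K] N) (p : Submodule K M) :
    finrank K (p.map f) + finrank K (ker f ⊓ p : Submodule K M) = finrank K p := by
  rw [← range_domRestrict, ← (Submodule.comapSubtypeEquivOfLe inf_le_right).finrank_eq,
    ← finrank_range_add_finrank_ker (f.domRestrict p), ker_domRestrict,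
    Submodule.comap_inf, Submodule.comap_subtype_self, inf_top_eq]

section PairingMetric

variable {W : Type*} [AddCommGroup W] [Module ℝ W]

lemma bigG_apply (p q : W × Dual ℝ W) : bigG W p q = 1 / 2 * (p.2 q.1 + q.2 p.1) := rfl

lemma bigG_comm (p q : W × Dual ℝ W) : bigG W p q = bigG W q p := by
  simp only [bigG_apply]; ring

lemma bigG_nondegenerate : (bigG W).Nondegenerate := by
  have hrefl : (bigG W).IsRefl := fun p q h ↦ (bigG_comm q p).trans h
  refine hrefl.nondegenerate_iff_separatingLeft.mpr fun p hp ↦ ?_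
  have h₂ : p.2 = 0 := by
    ext w
    simpa [bigG_apply] using hp (w, 0)
  have h₁ : p.1 = 0 :=
    (Module.forall_dual_apply_eq_zero_iff ℝ p.1).mp fun β ↦ by
      simpa [bigG_apply, h₂] using hp (0, β)
  exact Prod.ext h₁ h₂

lemma gOrth_sup (A B : Submodule ℝ (W × Dual ℝ W)) : gOrth (A ⊔ B) = gOrth A ⊓ gOrth B := by
  ext x
  simp only [gOrth, BilinForm.mem_orthogonal_iff, Submodule.mem_inf]
  refine ⟨fun h ↦ ⟨fun a ha ↦ h a (Submodule.mem_sup_left ha),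
    fun b hb ↦ h b (Submodule.mem_sup_right hb)⟩, ?_⟩
  rintro ⟨hA, hB⟩ _ hab
  obtain ⟨a, ha, b, hb, rfl⟩ := Submodule.mem_sup.mp hab
  rw [map_add, LinearMap.add_apply, hA a ha, hB b hb, add_zero]

variable [FiniteDimensional ℝ W]

lemma finrank_add_finrank_gOrth (A : Submodule ℝ (W × Dual ℝ W)) :
    finrank ℝ A + finrank ℝ (gOrth A) = 2 * finrank ℝ W := by
  have h := BilinForm.finrank_add_finrank_orthogonal' (B := bigG W) A
  rw [bigG_nondegenerate.ker_eq_bot, inf_bot_eq, finrank_bot, add_zero, finrank_prod,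
    Subspace.dual_finrank_eq] at h
  rw [gOrth, h]; ring

lemma finrank_eq_of_gOrth_eq {Δ : Submodule ℝ (W × Dual ℝ W)} (hΔ : gOrth Δ = Δ) :
    finrank ℝ Δ = finrank ℝ W := by
  have := finrank_add_finrank_gOrth Δ
  rw [hΔ] at this
  omega

lemma gOrth_eq_of_le_of_finrank_eq {A : Submodule ℝ (W × Dual ℝ W)} (hA : A ≤ gOrth A)
    (hdim : finrank ℝ A = finrank ℝ W) : gOrth A = A := by
  have := finrank_add_finrank_gOrth A
  exact (Submodule.eq_of_le_of_finrank_le hA (by omega)).symm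

lemma finrank_inf_gOrth_add_finrank {Δ : Submodule ℝ (W × Dual ℝ W)} (hΔ : gOrth Δ = Δ)
    (E : Submodule ℝ (W × Dual ℝ W)) :
    finrank ℝ (Δ ⊓ gOrth E : Submodule ℝ _) + finrank ℝ E =
      finrank ℝ W + finrank ℝ (Δ ⊓ E : Submodule ℝ _) := by
  have hsup := finrank_add_finrank_gOrth (Δ ⊔ E)
  have hΔdim := finrank_eq_of_gOrth_eq hΔ
  have := Submodule.finrank_sup_add_finrank_inf_eq Δ E
  rw [gOrth_sup, hΔ] at hsup
  omega

end PairingMetric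

section DiracImage

variable {V F : Type*} [AddCommGroup V] [Module ℝ V] [AddCommGroup F] [Module ℝ F]
  (J : Dual ℝ V →ₗ[ℝ] V) (G : F →ₗ[ℝ] V)

lemma phiMap_apply (x : Dual ℝ V × F) : phiMap J G x = (J x.1 + G x.2, x.1) := rfl

lemma psiMap_apply (x : Dual ℝ V × F) : psiMap G x = (x.2, G.dualMap x.1) := rfl

lemma bigG_phiMap (hJ : ∀ α β : Dual ℝ V, β (J α) = -α (J β)) (x y : Dual ℝ V × F) :
    bigG V (phiMap J G x) (phiMap J G y) = bigG F (psiMap G x) (psiMap G y) := by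
  simp only [bigG_apply, phiMap_apply, psiMap_apply, map_add, dualMap_apply, hJ x.1 y.1]
  ring

lemma map_phiMap_comap_psiMap_le_gOrth (hJ : ∀ α β : Dual ℝ V, β (J α) = -α (J β))
    {Δ : Submodule ℝ (F × Dual ℝ F)} (hΔ : Δ ≤ gOrth Δ) :
    (Δ.comap (psiMap G)).map (phiMap J G) ≤ gOrth ((Δ.comap (psiMap G)).map (phiMap J G)) := by
  rintro _ ⟨x, hx, rfl⟩ _ ⟨y, hy, rfl⟩
  change bigG V _ _ = 0
  rw [bigG_phiMap J G hJ]
  exact hΔ hx _ hy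

lemma ker_phiMap : ker (phiMap J G) = (ker G).map (inr ℝ (Dual ℝ V) F) := by
  ext ⟨α, f⟩
  simp only [mem_ker, phiMap_apply, Submodule.map_inr, Submodule.mem_prod, Submodule.mem_bot,
    Prod.ext_iff, Prod.fst_zero, Prod.snd_zero]
  constructor
  · rintro ⟨h, rfl⟩
    simpa using h
  · rintro ⟨rfl, h⟩
    simpa using h

lemma ker_psiMap : ker (psiMap G) = (ker G.dualMap).map (inl ℝ (Dual ℝ V) F) := by
  ext ⟨α, f⟩
  simp only [mem_ker, psiMap_apply, Submodule.map_inl, Submodule.mem_prod, Submodule.mem_bot,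
    Prod.ext_iff, Prod.fst_zero, Prod.snd_zero, and_comm]

lemma range_psiMap : range (psiMap G) = gOrth ((ker G).map (inl ℝ F (Dual ℝ F))) := by
  ext ⟨f, ℓ⟩
  have hrange : (f, ℓ) ∈ range (psiMap G) ↔ ℓ ∈ range G.dualMap :=
    ⟨fun ⟨x, hx⟩ ↦ ⟨x.1, congrArg Prod.snd hx⟩, fun ⟨α, hα⟩ ↦ ⟨(α, f), by rw [psiMap_apply, hα]⟩⟩
  rw [hrange, range_dualMap_eq_dualAnnihilator_ker, Submodule.mem_dualAnnihilator]
  simp [gOrth, BilinForm.mem_orthogonal_iff, Submodule.map_inl, bigG_apply]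

lemma map_psiMap_ker_phiMap_inf (Δ : Submodule ℝ (F × Dual ℝ F)) :
    (ker (phiMap J G) ⊓ Δ.comap (psiMap G)).map (psiMap G) =
      Δ ⊓ (ker G).map (inl ℝ F (Dual ℝ F)) := by
  ext ⟨f, ℓ⟩
  simp only [ker_phiMap, Submodule.map_inr, Submodule.map_inl, Submodule.mem_map,
    Submodule.mem_inf, Submodule.mem_prod, Submodule.mem_bot, Submodule.mem_comap, mem_ker,
    psiMap_apply]
  constructor
  · rintro ⟨⟨_, f'⟩, ⟨⟨rfl, hf'⟩, hΔ⟩, hx⟩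
    simp only [map_zero, Prod.mk.injEq] at hx hΔ hf'
    obtain ⟨rfl, rfl⟩ := hx
    exact ⟨hΔ, hf', rfl⟩
  · rintro ⟨hΔ, hf, rfl⟩
    exact ⟨(0, f), ⟨⟨rfl, hf⟩, by simpa using hΔ⟩, by simp⟩

lemma ker_psiMap_inf_ker_phiMap : ker (psiMap G) ⊓ ker (phiMap J G) = ⊥ := by
  rw [ker_psiMap, ker_phiMap, Submodule.map_inl, Submodule.map_inr, Submodule.prod_inf_prod,
    bot_inf_eq, inf_bot_eq, Submodule.prod_bot]

lemma finrank_map_phiMap_comap_psiMap [FiniteDimensional ℝ V] [FiniteDimensional ℝ F]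
    {Δ : Submodule ℝ (F × Dual ℝ F)} (hΔ : gOrth Δ = Δ) :
    finrank ℝ ((Δ.comap (psiMap G)).map (phiMap J G)) = finrank ℝ V := by
  have hφ := Submodule.finrank_map_add_finrank_ker_inf (phiMap J G) (Δ.comap (psiMap G))
  have hψ := Submodule.finrank_map_add_finrank_ker_inf (psiMap G) (Δ.comap (psiMap G))
  rw [Submodule.map_comap_eq, range_psiMap, inf_comm (gOrth _),
    inf_eq_left.mpr (ker_le_comap _)] at hψ
  have hψφ := Submodule.finrank_map_add_finrank_ker_inf (psiMap G)
    (ker (phiMap J G) ⊓ Δ.comap (psiMap G))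
  rw [map_psiMap_ker_phiMap_inf, ← inf_assoc, ker_psiMap_inf_ker_phiMap, bot_inf_eq, finrank_bot,
    add_zero] at hψφ
  have hΔE := finrank_inf_gOrth_add_finrank hΔ ((ker G).map (inl ℝ F (Dual ℝ F)))
  have hE : finrank ℝ ((ker G).map (inl ℝ F (Dual ℝ F))) = finrank ℝ (ker G) :=
    (Submodule.equivMapOfInjective _ inl_injective _).finrank_eq.symm
  have hkerψ : finrank ℝ (ker (psiMap G)) = finrank ℝ (ker G.dualMap) := by
    rw [ker_psiMap]
    exact (Submodule.equivMapOfInjective _ inl_injective _).finrank_eq.symm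
  have hG := finrank_range_add_finrank_ker G
  have hGdual := finrank_range_add_finrank_ker G.dualMap
  rw [Subspace.dual_finrank_eq, finrank_range_dualMap_eq_finrank_range] at hGdual
  omega

end DiracImage

/-- If `J` is skew and `Δ ⊆ F × F*` is maximal isotropic (`Δ^⊥ = Δ`), then
`D = {(Jα + Gf, α) : (f, G*α) ∈ Δ}` has `dim D = dim V`, hence `D^⊥ = D`
(an almost Dirac structure on `V`). -/
theorem stmt18 (V F : Type*) [AddCommGroup V] [Module ℝ V] [FiniteDimensional ℝ V]
    [AddCommGroup F] [Module ℝ F] [FiniteDimensional ℝ F]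
    (J : Dual ℝ V →ₗ[ℝ] V)
    (hJ : ∀ α β : Dual ℝ V, β (J α) = -α (J β))
    (G : F →ₗ[ℝ] V)
    (Δ : Submodule ℝ (F × Dual ℝ F))
    (hΔ : gOrth Δ = Δ)
    (D : Submodule ℝ (V × Dual ℝ V))
    (hD : D = Submodule.map (phiMap J G) (Submodule.comap (psiMap G) Δ)) :
    finrank ℝ D = finrank ℝ V ∧ gOrth D = D := by
  subst hD
  have hdim := finrank_map_phiMap_comap_psiMap J G hΔ
  exact ⟨hdim, gOrth_eq_of_le_of_finrank_eq (map_phiMap_comap_psiMap_le_gOrth J G hJ hΔ.ge) hdim⟩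
end
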